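/- The structural measure μ defined by μ(x)=μ(c)=1, μ(λx.t)=μ(t)+1, μ(t u)=μ(t)+μ(u), μ({θ}·t)=μ(t)·(μ(θ)+2), μ(θ)=Σ_{c∈dom θ} μ(θ(c)), strictly decreases under CaseCase reduction: if t →_CaseCase t' then μ(t') < μ(t). -/

import Mathlib

/- Terms of the lambda calculus with `n` constructors (de Bruijn indices).
`Ob n` plays the role of `Option (Tm n)`: a case-binding is a partial map
`Fin n → Ob n` from constructors to terms. -/
mutual
inductive Tm (n : ℕ) : Type where
  | var : ℕ → Tm n
  | app : Tm n → Tm n → Tm n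
  | lam : Tm n → Tm n
  | cst : Fin n → Tm n
  | cas : (Fin n → Ob n) → Tm n → Tm n
inductive Ob (n : ℕ) : Type where
  | none : Ob n
  | some : Tm n → Ob n
end

namespace LC

variable {n : ℕ}

/- Shift free de Bruijn indices `≥ k` by `d`. -/
mutual
def lift (d k : ℕ) : Tm n → Tm n
  | .var i => .var (if i < k then i else i + d)
  | .app t u => .app (lift d k t) (lift d k u)
  | .lam t => .lam (lift d (k+1) t)
  | .cst c => .cst c
  | .cas θ t => .cas (fun c => liftO d k (θ c)) (lift d k t)
def liftO (d k : ℕ) : Ob n → Ob n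
  | .none => .none
  | .some t => .some (lift d k t)
end

/- Lift a case-binding (used for the CaseLam rule, where the bound variable
must not occur free in the binding). -/
def liftB (θ : Fin n → Ob n) : Fin n → Ob n := fun c => liftO 1 0 (θ c)

/- Substitution of `u` for the variable `k` (capture-avoiding). -/
mutual
def subst (u : Tm n) (k : ℕ) : Tm n → Tm n
  | .var i => if i < k then .var i else if i = k then lift k 0 u else .var (i-1)
  | .app t v => .app (subst u k t) (subst u k v)
  | .lam t => .lam (subst u (k+1) t)
  | .cst c => .cst c
  | .cas θ t => .cas (fun c => substO u k (θ c)) (subst u k t)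
def substO (u : Tm n) (k : ℕ) : Ob n → Ob n
  | .none => .none
  | .some t => .some (subst u k t)
end

/- `{θ}·(-)` applied inside an optional branch. -/
def casO (θ : Fin n → Ob n) : Ob n → Ob n
  | .none => .none
  | .some u => .some (.cas θ u)

/- Composition of case-bindings: `(θ∘φ)(c) = {θ}·φ(c)` for `c ∈ dom φ`. -/
def compB (θ φ : Fin n → Ob n) : Fin n → Ob n := fun c => casO θ (φ c)

/- One-step reduction of the lambda calculus with constructors:
AppLam, LamApp, CaseCons, CaseApp, CaseLam, CaseCase, closed under all contexts. -/
inductive Step : Tm n → Tm n → Prop where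
  | appLam (t u : Tm n) : Step (.app (.lam t) u) (subst u 0 t)
  | lamApp (t : Tm n) : Step (.lam (.app (lift 1 0 t) (.var 0))) t
  | caseCons (θ : Fin n → Ob n) (c : Fin n) (u : Tm n) :
      θ c = .some u → Step (.cas θ (.cst c)) u
  | caseApp (θ : Fin n → Ob n) (t u : Tm n) :
      Step (.cas θ (.app t u)) (.app (.cas θ t) u)
  | caseLam (θ : Fin n → Ob n) (t : Tm n) :
      Step (.cas θ (.lam t)) (.lam (.cas (liftB θ) t))
  | caseCase (θ φ : Fin n → Ob n) (t : Tm n) :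
      Step (.cas θ (.cas φ t)) (.cas (compB θ φ) t)
  | appL {t t' : Tm n} (u : Tm n) : Step t t' → Step (.app t u) (.app t' u)
  | appR (t : Tm n) {u u' : Tm n} : Step u u' → Step (.app t u) (.app t u')
  | lamC {t t' : Tm n} : Step t t' → Step (.lam t) (.lam t')
  | casT (θ : Fin n → Ob n) {t t' : Tm n} : Step t t' → Step (.cas θ t) (.cas θ t')
  | casB (θ : Fin n → Ob n) (c : Fin n) {u u' : Tm n} (t : Tm n) :
      θ c = .some u → Step u u' →
      Step (.cas θ t) (.cas (Function.update θ c (.some u')) t)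

/- One-step reduction by the CaseCase rule only (closed under all contexts). -/
inductive StepCC : Tm n → Tm n → Prop where
  | caseCase (θ φ : Fin n → Ob n) (t : Tm n) :
      StepCC (.cas θ (.cas φ t)) (.cas (compB θ φ) t)
  | appL {t t' : Tm n} (u : Tm n) : StepCC t t' → StepCC (.app t u) (.app t' u)
  | appR (t : Tm n) {u u' : Tm n} : StepCC u u' → StepCC (.app t u) (.app t u')
  | lamC {t t' : Tm n} : StepCC t t' → StepCC (.lam t) (.lam t')
  | casT (θ : Fin n → Ob n) {t t' : Tm n} : StepCC t t' → StepCC (.cas θ t) (.cas θ t')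
  | casB (θ : Fin n → Ob n) (c : Fin n) {u u' : Tm n} (t : Tm n) :
      θ c = .some u → StepCC u u' →
      StepCC (.cas θ t) (.cas (Function.update θ c (.some u')) t)

/- One-step reduction λC⁻ : every rule except CaseCase (closed under all contexts). -/
inductive StepM : Tm n → Tm n → Prop where
  | appLam (t u : Tm n) : StepM (.app (.lam t) u) (subst u 0 t)
  | lamApp (t : Tm n) : StepM (.lam (.app (lift 1 0 t) (.var 0))) t
  | caseCons (θ : Fin n → Ob n) (c : Fin n) (u : Tm n) :
      θ c = .some u → StepM (.cas θ (.cst c)) u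
  | caseApp (θ : Fin n → Ob n) (t u : Tm n) :
      StepM (.cas θ (.app t u)) (.app (.cas θ t) u)
  | caseLam (θ : Fin n → Ob n) (t : Tm n) :
      StepM (.cas θ (.lam t)) (.lam (.cas (liftB θ) t))
  | appL {t t' : Tm n} (u : Tm n) : StepM t t' → StepM (.app t u) (.app t' u)
  | appR (t : Tm n) {u u' : Tm n} : StepM u u' → StepM (.app t u) (.app t u')
  | lamC {t t' : Tm n} : StepM t t' → StepM (.lam t) (.lam t')
  | casT (θ : Fin n → Ob n) {t t' : Tm n} : StepM t t' → StepM (.cas θ t) (.cas θ t')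
  | casB (θ : Fin n → Ob n) (c : Fin n) {u u' : Tm n} (t : Tm n) :
      θ c = .some u → StepM u u' →
      StepM (.cas θ t) (.cas (Function.update θ c (.some u')) t)

/- A term is defined when none of its subterms is a match failure `{θ}·c` with
`c ∉ dom θ`. -/
inductive Defined : Tm n → Prop where
  | var (i : ℕ) : Defined (.var i)
  | cst (c : Fin n) : Defined (.cst c)
  | app {t u : Tm n} : Defined t → Defined u → Defined (.app t u)
  | lam {t : Tm n} : Defined t → Defined (.lam t)
  | cas {θ : Fin n → Ob n} {t : Tm n} :
      (∀ c u, θ c = .some u → Defined u) → Defined t →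
      (∀ c, t = .cst c → θ c ≠ .none) → Defined (.cas θ t)

/- Hereditarily defined: every reduct (in any number of steps) is defined. -/
def HD (t : Tm n) : Prop := ∀ u, Relation.ReflTransGen Step t u → Defined u

section Completion
variable [NeZero n]

/- The canonical match failure `{}·c₁` used to fill missing branches. -/
def failTm : Tm n := .cas (fun _ => .none) (.cst 0)

/- Case-completion: replace every case-binding by its total completion,
filling each missing branch with `{}·c₁`. -/
mutual
def cpl : Tm n → Tm n
  | .var i => .var i
  | .app t u => .app (cpl t) (cpl u)
  | .lam t => .lam (cpl t)
  | .cst c => .cst c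
  | .cas θ t => .cas (fun c => .some (cplO (θ c))) (cpl t)
def cplO : Ob n → Tm n
  | .none => failTm
  | .some u => cpl u
end

end Completion

/- The structural measure μ. -/
mutual
def mes : Tm n → ℕ
  | .var _ => 1
  | .cst _ => 1
  | .lam t => mes t + 1
  | .app t u => mes t + mes u
  | .cas θ t => mes t * ((∑ c : Fin n, mesO (θ c)) + 2)
def mesO : Ob n → ℕ
  | .none => 0
  | .some t => mes t
end

end LC

namespace LC

variable {n : ℕ}

def mesB (θ : Fin n → Ob n) : ℕ := ∑ c, mesO (θ c)

theorem mes_cas (θ : Fin n → Ob n) (t : Tm n) : mes (.cas θ t) = mes t * (mesB θ + 2) := by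
  rw [mes, mesB]

theorem mes_pos : ∀ t : Tm n, 0 < mes t
  | .var _ | .cst _ | .lam _ => by simp [mes]
  | .app t _ => by have := mes_pos t; simp only [mes]; omega
  | .cas θ t => by rw [mes_cas]; have := mes_pos t; positivity

theorem mesO_casO (θ : Fin n → Ob n) : ∀ o : Ob n, mesO (casO θ o) = mesO o * (mesB θ + 2)
  | .none => by simp [casO, mesO]
  | .some u => by rw [casO, mesO, mesO, mes_cas]

theorem mesB_compB (θ φ : Fin n → Ob n) : mesB (compB θ φ) = mesB φ * (mesB θ + 2) := by
  simp only [mesB, compB, mesO_casO, Finset.sum_mul]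

theorem mes_compB_lt (θ φ : Fin n → Ob n) (t : Tm n) :
    mes (.cas (compB θ φ) t) < mes (.cas θ (.cas φ t)) := by
  rw [mes_cas, mes_cas, mes_cas, mesB_compB, mul_assoc]
  refine Nat.mul_lt_mul_of_pos_left ?_ (mes_pos t)
  rw [add_mul]
  omega

theorem mesB_update_lt {θ : Fin n → Ob n} {c : Fin n} {o : Ob n}
    (h : mesO o < mesO (θ c)) : mesB (Function.update θ c o) < mesB θ := by
  refine Finset.sum_lt_sum (fun c' _ => ?_) ⟨c, Finset.mem_univ c, by simpa using h⟩
  rcases eq_or_ne c' c with rfl | hc'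
  · simpa using h.le
  · rw [Function.update_of_ne hc']

/-- The structural measure μ strictly decreases under CaseCase reduction. -/
theorem mes_strict_decrease {n : ℕ} {t t' : Tm n} (h : StepCC t t') :
    mes t' < mes t := by
  induction h with
  | caseCase θ φ t => exact mes_compB_lt θ φ t
  | appL _ _ ih | appR _ _ ih | lamC _ ih => simp only [mes]; omega
  | casT θ _ ih =>
    rw [mes_cas, mes_cas]
    exact Nat.mul_lt_mul_of_pos_right ih (by omega)
  | casB θ c t hθc _ ih =>
    rw [mes_cas, mes_cas]
    refine Nat.mul_lt_mul_of_pos_left ?_ (mes_pos t)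
    have := mesB_update_lt (θ := θ) (c := c) (o := .some _) (by rwa [hθc])
    omega

end LC
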